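/- arXiv:2601.14985 — 2 statements merged into one kernel-verified Lean document; each statement's English description precedes it below -/
import Mathlib

section
/- For any type P ∈ P_k(V) and i.i.d. source distribution P^k with marginal P_V, the total probability Σ_{v ∈ T^k(P)} P^k(v) satisfies (k+1)^{-|V|} exp(-k D(P‖P_V)) ≤ Σ_{v ∈ T^k(P)} P^k(v) ≤ exp(-k D(P‖P_V)), where D is the Kullback–Leibler divergence. -/
open Finset Real

private lemma fact_le_mul_pow (m d : ℕ) : (m + d).factorial ≤ m.factorial * (m + d) ^ d := by
  induction d with
  | zero => simp
  | succ d ih =>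
    calc (m + (d + 1)).factorial = (m + d + 1) * (m + d).factorial := by
          rw [← Nat.add_assoc]; exact rfl
      _ ≤ (m + d + 1) * (m.factorial * (m + d) ^ d) := Nat.mul_le_mul_left _ ih
      _ ≤ (m + d + 1) * (m.factorial * (m + d + 1) ^ d) :=
          Nat.mul_le_mul_left _ (Nat.mul_le_mul_left _ (Nat.pow_le_pow_left (Nat.le_succ _) d))
      _ = m.factorial * (m + (d + 1)) ^ (d + 1) := by rw [pow_succ, ← Nat.add_assoc]; ring

private lemma key_nat (n m : ℕ) : n.factorial * n ^ m ≤ m.factorial * n ^ n := by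
  rcases le_total m n with h | h
  · obtain ⟨d, rfl⟩ := Nat.exists_eq_add_of_le h
    calc (m + d).factorial * (m + d) ^ m
        ≤ (m.factorial * (m + d) ^ d) * (m + d) ^ m :=
          Nat.mul_le_mul_right _ (fact_le_mul_pow m d)
      _ = m.factorial * (m + d) ^ (m + d) := by rw [mul_assoc, ← pow_add, Nat.add_comm d m]
  · obtain ⟨d, rfl⟩ := Nat.exists_eq_add_of_le h
    have h1 : n.factorial * n ^ d ≤ (n + d).factorial :=
      le_trans (Nat.mul_le_mul_left _ (Nat.pow_le_pow_left (Nat.le_succ n) d))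
        Nat.factorial_mul_pow_le_factorial
    calc n.factorial * n ^ (n + d) = (n.factorial * n ^ d) * n ^ n := by rw [pow_add]; ring
      _ ≤ (n + d).factorial * n ^ n := Nat.mul_le_mul_right _ h1


variable {V : Type} [Fintype V] [DecidableEq V] {k : ℕ}

private lemma count_sum (w : Fin k → V) :
    ∑ x, (univ.filter (fun i => w i = x)).card = k := by
  have := Finset.card_eq_sum_card_fiberwise (fun i (_ : i ∈ (univ : Finset (Fin k))) => mem_univ (w i))
  simpa using this.symm

private lemma count_comp (w : Fin k → V) (σ : Equiv.Perm (Fin k)) (x : V) :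
    (univ.filter (fun i => w (σ i) = x)).card = (univ.filter (fun i => w i = x)).card := by
  rw [← Fintype.card_subtype, ← Fintype.card_subtype]
  exact Fintype.card_congr (σ.subtypeEquiv (fun i => Iff.rfl))

private lemma exists_perm (v w : Fin k → V)
    (h : ∀ x, (univ.filter (fun i => v i = x)).card = (univ.filter (fun i => w i = x)).card) :
    ∃ σ : Equiv.Perm (Fin k), w ∘ σ = v := by
  have he : ∀ x : V, {i // v i = x} ≃ {i // w i = x} := fun x =>
    Fintype.equivOfCardEq (by rw [Fintype.card_subtype, Fintype.card_subtype]; exact h x)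
  exact ⟨Equiv.ofFiberEquiv he, funext fun i => Equiv.ofFiberEquiv_map he i⟩

private lemma card_class_mul (w : Fin k → V) :
    (univ.filter (fun v : Fin k → V => ∀ x, (univ.filter (fun i => v i = x)).card
        = (univ.filter (fun i => w i = x)).card)).card
      * ∏ x, ((univ.filter (fun i => w i = x)).card).factorial = Nat.factorial k := by
  classical
  have hmaps : ∀ σ : Equiv.Perm (Fin k), σ ∈ (univ : Finset (Equiv.Perm (Fin k))) →
      (w ∘ σ) ∈ univ.filter (fun v : Fin k → V => ∀ x, (univ.filter (fun i => v i = x)).card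
        = (univ.filter (fun i => w i = x)).card) := by
    intro σ _
    refine mem_filter.mpr ⟨mem_univ _, fun x => ?_⟩
    exact count_comp w σ x
  have hcard := Finset.card_eq_sum_card_fiberwise hmaps
  have huniv : (univ : Finset (Equiv.Perm (Fin k))).card = Nat.factorial k := by
    rw [Finset.card_univ, Fintype.card_perm, Fintype.card_fin]
  have hfiber : ∀ v ∈ univ.filter (fun v : Fin k → V => ∀ x, (univ.filter (fun i => v i = x)).card
        = (univ.filter (fun i => w i = x)).card),
      (univ.filter (fun σ : Equiv.Perm (Fin k) => w ∘ σ = v)).card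
        = ∏ x, ((univ.filter (fun i => w i = x)).card).factorial := by
    intro v hv
    obtain ⟨σ₀, hσ₀⟩ := exists_perm v w (fun x => (mem_filter.mp hv).2 x)
    have e : {σ : Equiv.Perm (Fin k) // w ∘ ⇑σ = v} ≃ {σ : Equiv.Perm (Fin k) // w ∘ ⇑σ = w} :=
      { toFun := fun σ => ⟨σ₀.symm.trans σ.1, by
          funext i
          have h1 : w (σ.1 (σ₀.symm i)) = v (σ₀.symm i) := congrFun σ.2 (σ₀.symm i)
          have h2 : v (σ₀.symm i) = w i := by
            have h3 := congrFun hσ₀ (σ₀.symm i)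
            simpa using h3.symm
          exact h1.trans h2⟩
        invFun := fun τ => ⟨σ₀.trans τ.1, by
          funext i
          have h1 : w (τ.1 (σ₀ i)) = w (σ₀ i) := congrFun τ.2 (σ₀ i)
          exact h1.trans (congrFun hσ₀ i)⟩
        left_inv := fun σ => Subtype.ext (by ext i; simp)
        right_inv := fun τ => Subtype.ext (by ext i; simp) }
    calc (univ.filter (fun σ : Equiv.Perm (Fin k) => w ∘ σ = v)).card
        = Fintype.card {σ : Equiv.Perm (Fin k) // w ∘ ⇑σ = v} := (Fintype.card_subtype _).symm
      _ = Fintype.card {σ : Equiv.Perm (Fin k) // w ∘ ⇑σ = w} := Fintype.card_congr e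
      _ = ∏ x, (Fintype.card {i // w i = x}).factorial := DomMulAct.stabilizer_card w
      _ = ∏ x, ((univ.filter (fun i => w i = x)).card).factorial := by
          refine Finset.prod_congr rfl fun x _ => ?_
          rw [Fintype.card_subtype]
    
  rw [huniv, Finset.sum_congr rfl hfiber, Finset.sum_const, smul_eq_mul] at hcard
  exact hcard.symm

private lemma class_le (v₀ w : Fin k → V) :
    (univ.filter (fun v : Fin k → V => ∀ x, (univ.filter (fun i => v i = x)).card
        = (univ.filter (fun i => w i = x)).card)).card
      * ∏ x, ((univ.filter (fun i => v₀ i = x)).card) ^ ((univ.filter (fun i => w i = x)).card)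
    ≤ (univ.filter (fun v : Fin k → V => ∀ x, (univ.filter (fun i => v i = x)).card
        = (univ.filter (fun i => v₀ i = x)).card)).card
      * ∏ x, ((univ.filter (fun i => v₀ i = x)).card) ^ ((univ.filter (fun i => v₀ i = x)).card) := by
  classical
  have e1 := card_class_mul w
  have e2 := card_class_mul v₀
  set a := (univ.filter (fun v : Fin k → V => ∀ x, (univ.filter (fun i => v i = x)).card
      = (univ.filter (fun i => w i = x)).card)).card
  set b := (univ.filter (fun v : Fin k → V => ∀ x, (univ.filter (fun i => v i = x)).card
      = (univ.filter (fun i => v₀ i = x)).card)).card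
  set PM := ∏ x, ((univ.filter (fun i => w i = x)).card).factorial with hPM
  set PN := ∏ x, ((univ.filter (fun i => v₀ i = x)).card).factorial with hPN
  set QM := ∏ x, ((univ.filter (fun i => v₀ i = x)).card) ^ ((univ.filter (fun i => w i = x)).card) with hQM
  set QN := ∏ x, ((univ.filter (fun i => v₀ i = x)).card) ^ ((univ.filter (fun i => v₀ i = x)).card) with hQN
  have key : PN * QM ≤ PM * QN := by
    rw [hPN, hQM, hPM, hQN, ← Finset.prod_mul_distrib, ← Finset.prod_mul_distrib]
    exact Finset.prod_le_prod' fun x _ => key_nat _ _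
  have hpos : 0 < PM * PN :=
    Nat.mul_pos (Finset.prod_pos fun x _ => Nat.factorial_pos _)
      (Finset.prod_pos fun x _ => Nat.factorial_pos _)
  have hmain : (a * QM) * (PM * PN) ≤ (b * QN) * (PM * PN) := by
    calc (a * QM) * (PM * PN) = (a * PM) * (PN * QM) := by ring
      _ = Nat.factorial k * (PN * QM) := by rw [e1]
      _ ≤ Nat.factorial k * (PM * QN) := Nat.mul_le_mul_left _ key
      _ = (b * PN) * (PM * QN) := by rw [e2]
      _ = (b * QN) * (PM * PN) := by ring
  exact Nat.le_of_mul_le_mul_right hmain hpos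


theorem type_class_probability_bounds
    (V : Type) [Fintype V] [DecidableEq V]
    (P_V : V → ℝ) (hPVnn : ∀ x, 0 ≤ P_V x) (hPV1 : ∑ x, P_V x = 1)
    (k : ℕ) (hk : 0 < k)
    (P : V → ℝ) (hPnn : ∀ x, 0 ≤ P x) (hP1 : ∑ x, P x = 1)
    (htype : ∃ v : Fin k → V, ∀ x, P x = ((Finset.univ.filter (fun i => v i = x)).card : ℝ) / k)
    (habs : ∀ x, P_V x = 0 → P x = 0) :
    ((k + 1 : ℝ) ^ (Fintype.card V))⁻¹ *
        Real.exp (-(k : ℝ) * ∑ x, P x * Real.log (P x / P_V x)) ≤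
      ∑ v ∈ Finset.univ.filter
          (fun v : Fin k → V =>
            ∀ x, P x = ((Finset.univ.filter (fun i => v i = x)).card : ℝ) / k),
        ∏ i, P_V (v i) ∧
    ∑ v ∈ Finset.univ.filter
        (fun v : Fin k → V =>
          ∀ x, P x = ((Finset.univ.filter (fun i => v i = x)).card : ℝ) / k),
      ∏ i, P_V (v i) ≤
      Real.exp (-(k : ℝ) * ∑ x, P x * Real.log (P x / P_V x)) := by
  classical
  obtain ⟨v₀, hv₀⟩ := htype
  have hkR : (0:ℝ) < (k:ℝ) := by exact_mod_cast hk
  have hkne : (k:ℝ) ≠ 0 := ne_of_gt hkR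
  have hPpos : ∀ x, (univ.filter (fun i => v₀ i = x)).card ≠ 0 → 0 < P x := by
    intro x hx
    rw [hv₀ x]
    have h : (0:ℝ) < ((univ.filter (fun i => v₀ i = x)).card : ℝ) := by
      exact_mod_cast Nat.pos_of_ne_zero hx
    exact div_pos h hkR
  have hPzero : ∀ x, (univ.filter (fun i => v₀ i = x)).card = 0 → P x = 0 := by
    intro x hx; rw [hv₀ x, hx]; simp
  have hPVpos : ∀ x, (univ.filter (fun i => v₀ i = x)).card ≠ 0 → 0 < P_V x := by
    intro x hx
    rcases (hPVnn x).lt_or_eq with h | h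
    · exact h
    · exact absurd (habs x h.symm) (ne_of_gt (hPpos x hx))
  -- rewrite the type class as a counting class
  have hTmem : ∀ v : Fin k → V,
      (∀ x, P x = ((univ.filter (fun i => v i = x)).card : ℝ) / k) ↔
      (∀ x, (univ.filter (fun i => v i = x)).card = (univ.filter (fun i => v₀ i = x)).card) := by
    intro v
    constructor
    · intro h x
      have h2 : ((univ.filter (fun i => v i = x)).card : ℝ) / k
          = ((univ.filter (fun i => v₀ i = x)).card : ℝ) / k := (h x).symm.trans (hv₀ x)
      have h3 : ((univ.filter (fun i => v i = x)).card : ℝ)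
          = ((univ.filter (fun i => v₀ i = x)).card : ℝ) := by
        field_simp at h2; exact_mod_cast h2
      exact_mod_cast h3
    · intro h x; rw [hv₀ x, h x]
  have hTset : (univ.filter (fun v : Fin k → V =>
        ∀ x, P x = ((univ.filter (fun i => v i = x)).card : ℝ) / k))
      = univ.filter (fun v : Fin k → V =>
        ∀ x, (univ.filter (fun i => v i = x)).card = (univ.filter (fun i => v₀ i = x)).card) :=
    Finset.filter_congr fun v _ => hTmem v
  rw [hTset]
  -- product over a sequence, fiberwise
  have hprodcomp : ∀ (f : V → ℝ) (v : Fin k → V),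
      ∏ i, f (v i) = ∏ x, f x ^ (univ.filter (fun i => v i = x)).card := by
    intro f v
    rw [← Finset.prod_fiberwise univ v (fun i => f (v i))]
    refine Finset.prod_congr rfl fun x _ => ?_
    calc ∏ i ∈ univ.filter (fun i => v i = x), f (v i)
        = ∏ _i ∈ univ.filter (fun i => v i = x), f x :=
          Finset.prod_congr rfl fun i hi => by rw [(Finset.mem_filter.mp hi).2]
      _ = f x ^ (univ.filter (fun i => v i = x)).card := Finset.prod_const _
  -- sum over a class
  have hsumclass : ∀ (f : V → ℝ) (w : Fin k → V),
      ∑ v ∈ univ.filter (fun v : Fin k → V =>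
          ∀ x, (univ.filter (fun i => v i = x)).card = (univ.filter (fun i => w i = x)).card),
        ∏ i, f (v i)
      = ((univ.filter (fun v : Fin k → V =>
          ∀ x, (univ.filter (fun i => v i = x)).card
            = (univ.filter (fun i => w i = x)).card)).card : ℝ)
        * ∏ x, f x ^ (univ.filter (fun i => w i = x)).card := by
    intro f w
    have h : ∀ v ∈ univ.filter (fun v : Fin k → V =>
        ∀ x, (univ.filter (fun i => v i = x)).card = (univ.filter (fun i => w i = x)).card),
        ∏ i, f (v i) = ∏ x, f x ^ (univ.filter (fun i => w i = x)).card := by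
      intro v hv
      rw [hprodcomp f v]
      exact Finset.prod_congr rfl fun x _ => by rw [(Finset.mem_filter.mp hv).2 x]
    rw [Finset.sum_congr rfl h, Finset.sum_const, nsmul_eq_mul]
  -- total probability one
  have htotal : ∑ v : Fin k → V, ∏ i, P (v i) = 1 := by
    have h := Finset.prod_univ_sum (fun _ : Fin k => (univ : Finset V)) (fun _ x => P x)
    rw [Fintype.piFinset_univ] at h
    rw [← h]
    simp [hP1]
  have hBnn : (0:ℝ) ≤ ∏ x, P x ^ (univ.filter (fun i => v₀ i = x)).card :=
    Finset.prod_nonneg fun x _ => pow_nonneg (hPnn x) _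
  have hBpos : (0:ℝ) < ∏ x, P x ^ (univ.filter (fun i => v₀ i = x)).card := by
    refine Finset.prod_pos fun x _ => ?_
    rcases eq_or_ne ((univ.filter (fun i => v₀ i = x)).card) 0 with h | h
    · rw [h, pow_zero]; exact one_pos
    · exact pow_pos (hPpos x h) _
  have hApos : (0:ℝ) < ∏ x, P_V x ^ (univ.filter (fun i => v₀ i = x)).card := by
    refine Finset.prod_pos fun x _ => ?_
    rcases eq_or_ne ((univ.filter (fun i => v₀ i = x)).card) 0 with h | h
    · rw [h, pow_zero]; exact one_pos
    · exact pow_pos (hPVpos x h) _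
  -- type class probability at most 1 under P itself
  have hT1 : ((univ.filter (fun v : Fin k → V =>
        ∀ x, (univ.filter (fun i => v i = x)).card
          = (univ.filter (fun i => v₀ i = x)).card)).card : ℝ)
      * ∏ x, P x ^ (univ.filter (fun i => v₀ i = x)).card ≤ 1 := by
    rw [← hsumclass P v₀, ← htotal]
    exact Finset.sum_le_sum_of_subset_of_nonneg (Finset.subset_univ _)
      (fun v _ _ => Finset.prod_nonneg fun i _ => hPnn _)
  -- product formula as a rational in ℕ
  have hPw : ∀ w : Fin k → V,
      ∏ x, P x ^ (univ.filter (fun i => w i = x)).card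
      = ((∏ x, ((univ.filter (fun i => v₀ i = x)).card)
            ^ ((univ.filter (fun i => w i = x)).card) : ℕ) : ℝ) / (k:ℝ)^k := by
    intro w
    have h1 : ∀ x ∈ (univ : Finset V), P x ^ (univ.filter (fun i => w i = x)).card
        = (((univ.filter (fun i => v₀ i = x)).card : ℝ))^((univ.filter (fun i => w i = x)).card)
          / (k:ℝ)^((univ.filter (fun i => w i = x)).card) := fun x _ => by
      rw [hv₀ x, div_pow]
    rw [Finset.prod_congr rfl h1, Finset.prod_div_distrib, Finset.prod_pow_eq_pow_sum,
      count_sum w]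
    push_cast
    ring
  -- class comparison over ℝ
  have hclassR : ∀ w : Fin k → V,
      ((univ.filter (fun v : Fin k → V =>
          ∀ x, (univ.filter (fun i => v i = x)).card
            = (univ.filter (fun i => w i = x)).card)).card : ℝ)
        * ∏ x, P x ^ (univ.filter (fun i => w i = x)).card
      ≤ ((univ.filter (fun v : Fin k → V =>
          ∀ x, (univ.filter (fun i => v i = x)).card
            = (univ.filter (fun i => v₀ i = x)).card)).card : ℝ)
        * ∏ x, P x ^ (univ.filter (fun i => v₀ i = x)).card := by
    intro w
    rw [hPw w, hPw v₀]
    have hkk : (0:ℝ) < (k:ℝ)^k := pow_pos hkR k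
    have h := class_le v₀ w
    have hR : (((univ.filter (fun v : Fin k → V =>
          ∀ x, (univ.filter (fun i => v i = x)).card
            = (univ.filter (fun i => w i = x)).card)).card
        * ∏ x, ((univ.filter (fun i => v₀ i = x)).card)
            ^ ((univ.filter (fun i => w i = x)).card) : ℕ) : ℝ)
        ≤ (((univ.filter (fun v : Fin k → V =>
          ∀ x, (univ.filter (fun i => v i = x)).card
            = (univ.filter (fun i => v₀ i = x)).card)).card
        * ∏ x, ((univ.filter (fun i => v₀ i = x)).card)
            ^ ((univ.filter (fun i => v₀ i = x)).card) : ℕ) : ℝ) := Nat.cast_le.mpr h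
    push_cast at hR
    calc ((univ.filter (fun v : Fin k → V =>
          ∀ x, (univ.filter (fun i => v i = x)).card
            = (univ.filter (fun i => w i = x)).card)).card : ℝ)
        * (((∏ x, ((univ.filter (fun i => v₀ i = x)).card)
            ^ ((univ.filter (fun i => w i = x)).card) : ℕ) : ℝ) / (k:ℝ)^k)
        = (((univ.filter (fun v : Fin k → V =>
          ∀ x, (univ.filter (fun i => v i = x)).card
            = (univ.filter (fun i => w i = x)).card)).card : ℝ)
          * ((∏ x, ((univ.filter (fun i => v₀ i = x)).card)
            ^ ((univ.filter (fun i => w i = x)).card) : ℕ) : ℝ)) / (k:ℝ)^k := by ring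
      _ ≤ (((univ.filter (fun v : Fin k → V =>
          ∀ x, (univ.filter (fun i => v i = x)).card
            = (univ.filter (fun i => v₀ i = x)).card)).card : ℝ)
          * ((∏ x, ((univ.filter (fun i => v₀ i = x)).card)
            ^ ((univ.filter (fun i => v₀ i = x)).card) : ℕ) : ℝ)) / (k:ℝ)^k := by
          apply div_le_div_of_nonneg_right ?_ hkk.le
          push_cast
          exact hR
      _ = ((univ.filter (fun v : Fin k → V =>
          ∀ x, (univ.filter (fun i => v i = x)).card
            = (univ.filter (fun i => v₀ i = x)).card)).card : ℝ)
        * (((∏ x, ((univ.filter (fun i => v₀ i = x)).card)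
            ^ ((univ.filter (fun i => v₀ i = x)).card) : ℕ) : ℝ) / (k:ℝ)^k) := by ring
  -- the exponential identity
  have hE : Real.exp (-(k : ℝ) * ∑ x, P x * Real.log (P x / P_V x))
      = (∏ x, P_V x ^ (univ.filter (fun i => v₀ i = x)).card)
        / (∏ x, P x ^ (univ.filter (fun i => v₀ i = x)).card) := by
    have hne : ∀ x ∈ (univ : Finset V), -(k:ℝ) * (P x * Real.log (P x / P_V x)) ≠ 0 →
        (univ.filter (fun i => v₀ i = x)).card ≠ 0 := by
      intro x _ h0 hc
      exact h0 (by rw [hPzero x hc]; ring)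
    have h1 : -(k : ℝ) * ∑ x, P x * Real.log (P x / P_V x)
        = ∑ x ∈ univ.filter (fun x => (univ.filter (fun i => v₀ i = x)).card ≠ 0),
            (((univ.filter (fun i => v₀ i = x)).card : ℝ) * Real.log (P_V x / P x)) := by
      rw [Finset.mul_sum, ← Finset.sum_filter_of_ne hne]
      refine Finset.sum_congr rfl fun x hx => ?_
      have hx' := (Finset.mem_filter.mp hx).2
      have hPx := hPpos x hx'
      have hPVx := hPVpos x hx'
      have hkP : (k:ℝ) * P x = ((univ.filter (fun i => v₀ i = x)).card : ℝ) := by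
        rw [hv₀ x]; field_simp
      calc -(k:ℝ) * (P x * Real.log (P x / P_V x))
          = ((k:ℝ) * P x) * -Real.log (P x / P_V x) := by ring
        _ = ((univ.filter (fun i => v₀ i = x)).card : ℝ) * Real.log (P_V x / P x) := by
            rw [hkP, ← Real.log_inv, inv_div]
    rw [h1, Real.exp_sum]
    have h2 : ∀ x ∈ univ.filter (fun x => (univ.filter (fun i => v₀ i = x)).card ≠ 0),
        Real.exp (((univ.filter (fun i => v₀ i = x)).card : ℝ) * Real.log (P_V x / P x))
        = P_V x ^ (univ.filter (fun i => v₀ i = x)).card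
          / P x ^ (univ.filter (fun i => v₀ i = x)).card := by
      intro x hx
      have hx' := (Finset.mem_filter.mp hx).2
      rw [Real.exp_nat_mul, Real.exp_log (div_pos (hPVpos x hx') (hPpos x hx')), div_pow]
    rw [Finset.prod_congr rfl h2, Finset.prod_div_distrib]
    congr 1
    · refine Finset.prod_subset (Finset.filter_subset _ _) fun x _ hx => ?_
      have : (univ.filter (fun i => v₀ i = x)).card = 0 := by
        by_contra hc
        exact hx (Finset.mem_filter.mpr ⟨Finset.mem_univ x, hc⟩)
      rw [this, pow_zero]
    · refine Finset.prod_subset (Finset.filter_subset _ _) fun x _ hx => ?_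
      have : (univ.filter (fun i => v₀ i = x)).card = 0 := by
        by_contra hc
        exact hx (Finset.mem_filter.mpr ⟨Finset.mem_univ x, hc⟩)
      rw [this, pow_zero]
  -- the number of types is at most (k+1)^|V|
  have hcard_image : (((univ : Finset (Fin k → V)).image
      (fun v => fun x => (univ.filter (fun i => v i = x)).card)).card : ℝ)
      ≤ ((k:ℝ)+1)^(Fintype.card V) := by
    have hsub : (univ : Finset (Fin k → V)).image
        (fun v => fun x => (univ.filter (fun i => v i = x)).card)
        ⊆ Fintype.piFinset (fun _ : V => Finset.range (k+1)) := by
      intro M hM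
      rw [Fintype.mem_piFinset]
      intro x
      obtain ⟨v, -, rfl⟩ := Finset.mem_image.mp hM
      refine Finset.mem_range.mpr (Nat.lt_succ_of_le ?_)
      calc (univ.filter (fun i => v i = x)).card
          ≤ (univ : Finset (Fin k)).card := Finset.card_filter_le _ _
        _ = k := by simp
    have hle := Finset.card_le_card hsub
    have hc : (Fintype.piFinset (fun _ : V => Finset.range (k+1))).card
        = (k+1)^(Fintype.card V) := by
      simp [Fintype.card_piFinset]
    rw [hc] at hle
    calc (((univ : Finset (Fin k → V)).image
        (fun v => fun x => (univ.filter (fun i => v i = x)).card)).card : ℝ)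
        ≤ (((k+1)^(Fintype.card V) : ℕ) : ℝ) := Nat.cast_le.mpr hle
      _ = ((k:ℝ)+1)^(Fintype.card V) := by push_cast; ring
  -- decompose the total probability by type classes
  have hfib : ∑ M ∈ (univ : Finset (Fin k → V)).image
        (fun v => fun x => (univ.filter (fun i => v i = x)).card),
      ∑ v ∈ univ.filter (fun v : Fin k → V =>
          (fun x => (univ.filter (fun i => v i = x)).card) = M),
        ∏ i, P (v i) = 1 := by
    rw [Finset.sum_fiberwise_of_maps_to
      (fun v _ => Finset.mem_image_of_mem _ (Finset.mem_univ v))]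
    exact htotal
  have hperM : ∀ M ∈ (univ : Finset (Fin k → V)).image
        (fun v => fun x => (univ.filter (fun i => v i = x)).card),
      ∑ v ∈ univ.filter (fun v : Fin k → V =>
          (fun x => (univ.filter (fun i => v i = x)).card) = M),
        ∏ i, P (v i)
      ≤ ((univ.filter (fun v : Fin k → V =>
          ∀ x, (univ.filter (fun i => v i = x)).card
            = (univ.filter (fun i => v₀ i = x)).card)).card : ℝ)
        * ∏ x, P x ^ (univ.filter (fun i => v₀ i = x)).card := by
    intro M hM
    obtain ⟨w, -, rfl⟩ := Finset.mem_image.mp hM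
    have hfe : univ.filter (fun v : Fin k → V =>
          (fun x => (univ.filter (fun i => v i = x)).card)
            = (fun x => (univ.filter (fun i => w i = x)).card))
        = univ.filter (fun v : Fin k → V =>
          ∀ x, (univ.filter (fun i => v i = x)).card
            = (univ.filter (fun i => w i = x)).card) :=
      Finset.filter_congr fun v _ => funext_iff
    rw [hfe, hsumclass P w]
    exact hclassR w
  have hone : (1:ℝ) ≤ ((k:ℝ)+1)^(Fintype.card V)
      * (((univ.filter (fun v : Fin k → V =>
          ∀ x, (univ.filter (fun i => v i = x)).card
            = (univ.filter (fun i => v₀ i = x)).card)).card : ℝ)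
        * ∏ x, P x ^ (univ.filter (fun i => v₀ i = x)).card) := by
    have hTBnn : (0:ℝ) ≤ ((univ.filter (fun v : Fin k → V =>
          ∀ x, (univ.filter (fun i => v i = x)).card
            = (univ.filter (fun i => v₀ i = x)).card)).card : ℝ)
        * ∏ x, P x ^ (univ.filter (fun i => v₀ i = x)).card :=
      mul_nonneg (Nat.cast_nonneg _) hBnn
    calc (1:ℝ) = ∑ M ∈ (univ : Finset (Fin k → V)).image
          (fun v => fun x => (univ.filter (fun i => v i = x)).card),
        ∑ v ∈ univ.filter (fun v : Fin k → V =>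
            (fun x => (univ.filter (fun i => v i = x)).card) = M),
          ∏ i, P (v i) := hfib.symm
      _ ≤ (((univ : Finset (Fin k → V)).image
            (fun v => fun x => (univ.filter (fun i => v i = x)).card)).card : ℕ)
          • (((univ.filter (fun v : Fin k → V =>
              ∀ x, (univ.filter (fun i => v i = x)).card
                = (univ.filter (fun i => v₀ i = x)).card)).card : ℝ)
            * ∏ x, P x ^ (univ.filter (fun i => v₀ i = x)).card) :=
          Finset.sum_le_card_nsmul _ _ _ hperM
      _ = (((univ : Finset (Fin k → V)).image
            (fun v => fun x => (univ.filter (fun i => v i = x)).card)).card : ℝ)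
          * (((univ.filter (fun v : Fin k → V =>
              ∀ x, (univ.filter (fun i => v i = x)).card
                = (univ.filter (fun i => v₀ i = x)).card)).card : ℝ)
            * ∏ x, P x ^ (univ.filter (fun i => v₀ i = x)).card) := by
          rw [nsmul_eq_mul]
      _ ≤ ((k:ℝ)+1)^(Fintype.card V)
          * (((univ.filter (fun v : Fin k → V =>
              ∀ x, (univ.filter (fun i => v i = x)).card
                = (univ.filter (fun i => v₀ i = x)).card)).card : ℝ)
            * ∏ x, P x ^ (univ.filter (fun i => v₀ i = x)).card) :=
          mul_le_mul_of_nonneg_right hcard_image hTBnn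
  have hTB : (((k:ℝ)+1)^(Fintype.card V))⁻¹
      ≤ ((univ.filter (fun v : Fin k → V =>
          ∀ x, (univ.filter (fun i => v i = x)).card
            = (univ.filter (fun i => v₀ i = x)).card)).card : ℝ)
        * ∏ x, P x ^ (univ.filter (fun i => v₀ i = x)).card := by
    have hpos : (0:ℝ) < ((k:ℝ)+1)^(Fintype.card V) := by positivity
    calc (((k:ℝ)+1)^(Fintype.card V))⁻¹
        = (((k:ℝ)+1)^(Fintype.card V))⁻¹ * 1 := (mul_one _).symm
      _ ≤ (((k:ℝ)+1)^(Fintype.card V))⁻¹ * (((k:ℝ)+1)^(Fintype.card V)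
          * (((univ.filter (fun v : Fin k → V =>
              ∀ x, (univ.filter (fun i => v i = x)).card
                = (univ.filter (fun i => v₀ i = x)).card)).card : ℝ)
            * ∏ x, P x ^ (univ.filter (fun i => v₀ i = x)).card)) :=
          mul_le_mul_of_nonneg_left hone (inv_nonneg.mpr hpos.le)
      _ = _ := by
          rw [← mul_assoc, inv_mul_cancel₀ (ne_of_gt hpos), one_mul]
  -- final assembly
  rw [hsumclass P_V v₀, hE]
  have hdivnn : (0:ℝ) ≤ (∏ x, P_V x ^ (univ.filter (fun i => v₀ i = x)).card)
      / (∏ x, P x ^ (univ.filter (fun i => v₀ i = x)).card) :=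
    div_nonneg hApos.le hBnn
  have hkey : ((univ.filter (fun v : Fin k → V =>
        ∀ x, (univ.filter (fun i => v i = x)).card
          = (univ.filter (fun i => v₀ i = x)).card)).card : ℝ)
      * ∏ x, P_V x ^ (univ.filter (fun i => v₀ i = x)).card
      = (((univ.filter (fun v : Fin k → V =>
        ∀ x, (univ.filter (fun i => v i = x)).card
          = (univ.filter (fun i => v₀ i = x)).card)).card : ℝ)
      * ∏ x, P x ^ (univ.filter (fun i => v₀ i = x)).card)
      * ((∏ x, P_V x ^ (univ.filter (fun i => v₀ i = x)).card)
        / (∏ x, P x ^ (univ.filter (fun i => v₀ i = x)).card)) := by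
    field_simp
  constructor
  · calc (((k:ℝ)+1)^(Fintype.card V))⁻¹
        * ((∏ x, P_V x ^ (univ.filter (fun i => v₀ i = x)).card)
          / (∏ x, P x ^ (univ.filter (fun i => v₀ i = x)).card))
        ≤ (((univ.filter (fun v : Fin k → V =>
            ∀ x, (univ.filter (fun i => v i = x)).card
              = (univ.filter (fun i => v₀ i = x)).card)).card : ℝ)
          * ∏ x, P x ^ (univ.filter (fun i => v₀ i = x)).card)
          * ((∏ x, P_V x ^ (univ.filter (fun i => v₀ i = x)).card)
            / (∏ x, P x ^ (univ.filter (fun i => v₀ i = x)).card)) :=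
          mul_le_mul_of_nonneg_right hTB hdivnn
      _ = _ := hkey.symm
  · calc ((univ.filter (fun v : Fin k → V =>
          ∀ x, (univ.filter (fun i => v i = x)).card
            = (univ.filter (fun i => v₀ i = x)).card)).card : ℝ)
        * ∏ x, P_V x ^ (univ.filter (fun i => v₀ i = x)).card
        = (((univ.filter (fun v : Fin k → V =>
            ∀ x, (univ.filter (fun i => v i = x)).card
              = (univ.filter (fun i => v₀ i = x)).card)).card : ℝ)
          * ∏ x, P x ^ (univ.filter (fun i => v₀ i = x)).card)
          * ((∏ x, P_V x ^ (univ.filter (fun i => v₀ i = x)).card)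
            / (∏ x, P x ^ (univ.filter (fun i => v₀ i = x)).card)) := hkey
      _ ≤ 1 * ((∏ x, P_V x ^ (univ.filter (fun i => v₀ i = x)).card)
            / (∏ x, P x ^ (univ.filter (fun i => v₀ i = x)).card)) :=
          mul_le_mul_of_nonneg_right hT1 hdivnn
      _ = _ := one_mul _
end

section
/- Main comparison theorem: E^mc_{J,ex}(t) ≥ E^sc_{J,ex}(t), where E^mc_{J,ex}(t) = max over pairs {Q, Q'} of distributions on X of sup_{ρ≥1}{Ē_x'({Q,Q'}, ρ) - t E_s(ρ, P_V)} and E^sc_{J,ex}(t) = max_Q sup_{ρ≥1}{E_x(Q,ρ) - t E_s(ρ, P_V)}. That is, the optimal two-class expurgated joint source-channel exponent is no smaller than the optimal single-class one. -/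
open Finset Real

noncomputable def dB {X Y : Type} [Fintype Y] (W : X → Y → ℝ) (x xb : X) : ℝ :=
  -Real.log (∑ y, Real.sqrt (W x y * W xb y))

noncomputable def Ex {X Y : Type} [Fintype X] [Fintype Y] (W : X → Y → ℝ)
    (Q : X → ℝ) (ρ : ℝ) : ℝ :=
  -ρ * Real.log (∑ x : X, ∑ xb : X, Q x * Q xb * Real.exp (-(dB W x xb) / ρ))

noncomputable def ExPrimeQ {X Y : Type} [Fintype X] [Fintype Y] (W : X → Y → ℝ)
    (Q Q₁ Q₂ : X → ℝ) (ρ : ℝ) : ℝ :=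
  min (-ρ * Real.log (∑ x : X, ∑ xb : X, Q x * Q₁ xb * Real.exp (-(dB W x xb) / ρ)))
      (-ρ * Real.log (∑ x : X, ∑ xb : X, Q x * Q₂ xb * Real.exp (-(dB W x xb) / ρ)))

noncomputable def ExPrimePair {X Y : Type} [Fintype X] [Fintype Y] (W : X → Y → ℝ)
    (Q₁ Q₂ : X → ℝ) (ρ : ℝ) : ℝ :=
  max (ExPrimeQ W Q₁ Q₁ Q₂ ρ) (ExPrimeQ W Q₂ Q₁ Q₂ ρ)

noncomputable def concaveHull (F : ℝ → ℝ) (ρ : ℝ) : ℝ :=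
  sSup {z : ℝ | ∃ ρ₁ ρ₂ lam : ℝ, 1 ≤ ρ₁ ∧ 1 ≤ ρ₂ ∧ 0 ≤ lam ∧ lam ≤ 1 ∧
    lam * ρ₁ + (1 - lam) * ρ₂ = ρ ∧ z = lam * F ρ₁ + (1 - lam) * F ρ₂}

noncomputable def Es {V : Type} [Fintype V] (P_V : V → ℝ) (ρ : ℝ) : ℝ :=
  (1 + ρ) * Real.log (∑ v, (P_V v) ^ (1 / (1 + ρ)))

-- Jensen: -ρ log (∑ w exp(-b/ρ)) ≤ ∑ w b
lemma key_jensen {ι : Type*} [Fintype ι] (w b : ι → ℝ)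
    (hw : ∀ i, 0 ≤ w i) (hw1 : ∑ i, w i = 1) (ρ : ℝ) (hρ : 0 < ρ) :
    -ρ * Real.log (∑ i, w i * Real.exp (-(b i) / ρ)) ≤ ∑ i, w i * b i := by
  have hjen := convexOn_exp.map_sum_le (t := Finset.univ) (w := w)
      (p := fun i => -(b i) / ρ) (fun i _ => hw i) hw1 (fun i _ => Set.mem_univ _)
  simp only [smul_eq_mul] at hjen
  have hS : Real.exp (∑ i, w i * (-(b i) / ρ)) ≤ ∑ i, w i * Real.exp (-(b i) / ρ) := hjen
  have hSpos : 0 < ∑ i, w i * Real.exp (-(b i) / ρ) := lt_of_lt_of_le (Real.exp_pos _) hS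
  have hlog : ∑ i, w i * (-(b i) / ρ) ≤ Real.log (∑ i, w i * Real.exp (-(b i) / ρ)) :=
    (Real.le_log_iff_exp_le hSpos).2 hS
  have hsum : ∑ i, w i * (-(b i) / ρ) = -(∑ i, w i * b i) / ρ := by
    rw [← Finset.sum_neg_distrib, Finset.sum_div]
    apply Finset.sum_congr rfl; intro i _; ring
  rw [hsum] at hlog
  have := mul_le_mul_of_nonneg_left hlog (le_of_lt hρ)
  have h2 : ρ * (-(∑ i, w i * b i) / ρ) = -(∑ i, w i * b i) := by
    rw [mul_comm, div_mul_cancel₀ _ (ne_of_gt hρ)]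
  rw [h2] at this; linarith

-- The basic term is bounded by C := ∑∑ |dB|.
lemma term_le_C {X Y : Type} [Fintype X] [Fintype Y] (W : X → Y → ℝ)
    (Q Q' : X → ℝ) (hQ : ∀ x, 0 ≤ Q x) (hQ1 : ∑ x, Q x = 1)
    (hQ' : ∀ x, 0 ≤ Q' x) (hQ1' : ∑ x, Q' x = 1) (ρ : ℝ) (hρ : 0 < ρ) :
    -ρ * Real.log (∑ x : X, ∑ xb : X, Q x * Q' xb * Real.exp (-(dB W x xb) / ρ)) ≤
      ∑ x : X, ∑ xb : X, |dB W x xb| := by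
  have hw : ∀ p : X × X, 0 ≤ Q p.1 * Q' p.2 := fun p => mul_nonneg (hQ _) (hQ' _)
  have hw1 : ∑ p : X × X, Q p.1 * Q' p.2 = 1 := by
    rw [← Finset.univ_product_univ, Finset.sum_product]
    simp [← Finset.sum_mul, ← Finset.mul_sum, hQ1, hQ1']
  have hk := key_jensen (fun p : X × X => Q p.1 * Q' p.2) (fun p => dB W p.1 p.2)
      hw hw1 ρ hρ
  have heq : ∑ p : X × X, Q p.1 * Q' p.2 * Real.exp (-(dB W p.1 p.2) / ρ) =
      ∑ x : X, ∑ xb : X, Q x * Q' xb * Real.exp (-(dB W x xb) / ρ) := by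
    rw [← Finset.univ_product_univ, Finset.sum_product]
  have heq2 : ∑ p : X × X, Q p.1 * Q' p.2 * dB W p.1 p.2 =
      ∑ x : X, ∑ xb : X, Q x * Q' xb * dB W x xb := by
    rw [← Finset.univ_product_univ, Finset.sum_product]
  rw [heq, heq2] at hk
  refine hk.trans (Finset.sum_le_sum fun x _ => Finset.sum_le_sum fun xb _ => ?_)
  have hQle : Q x ≤ 1 := by
    calc Q x ≤ ∑ x, Q x := Finset.single_le_sum (fun i _ => hQ i) (Finset.mem_univ x)
    _ = 1 := hQ1
  have hQle' : Q' xb ≤ 1 := by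
    calc Q' xb ≤ ∑ x, Q' x := Finset.single_le_sum (fun i _ => hQ' i) (Finset.mem_univ xb)
    _ = 1 := hQ1'
  have h1 : Q x * Q' xb ≤ 1 := by nlinarith [hQ x, hQ' xb]
  calc Q x * Q' xb * dB W x xb ≤ Q x * Q' xb * |dB W x xb| :=
        mul_le_mul_of_nonneg_left (le_abs_self _) (mul_nonneg (hQ x) (hQ' xb))
    _ ≤ 1 * |dB W x xb| := mul_le_mul_of_nonneg_right h1 (abs_nonneg _)
    _ = |dB W x xb| := one_mul _

lemma Es_nonneg {V : Type} [Fintype V] (P_V : V → ℝ) (hPnn : ∀ v, 0 ≤ P_V v)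
    (hP1 : ∑ v, P_V v = 1) (ρ : ℝ) (hρ : 1 ≤ ρ) : 0 ≤ Es P_V ρ := by
  have h1ρ : (0:ℝ) < 1 + ρ := by linarith
  have hexp : 0 ≤ 1 / (1 + ρ) := by positivity
  have hexp1 : 1 / (1 + ρ) ≤ 1 := by
    rw [div_le_one h1ρ]; linarith
  have hterm : ∀ v, P_V v ≤ (P_V v) ^ (1 / (1 + ρ)) := by
    intro v
    rcases eq_or_lt_of_le (hPnn v) with h | h
    · rw [← h, Real.zero_rpow (by positivity : 1 / (1 + ρ) ≠ 0)]
    · have hle : P_V v ≤ 1 := by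
        calc P_V v ≤ ∑ v, P_V v := Finset.single_le_sum (fun i _ => hPnn i) (Finset.mem_univ v)
          _ = 1 := hP1
      calc P_V v = (P_V v) ^ (1:ℝ) := (Real.rpow_one _).symm
        _ ≤ (P_V v) ^ (1 / (1 + ρ)) := Real.rpow_le_rpow_of_exponent_ge h hle hexp1
  have hsum : (1:ℝ) ≤ ∑ v, (P_V v) ^ (1 / (1 + ρ)) := by
    calc (1:ℝ) = ∑ v, P_V v := hP1.symm
      _ ≤ ∑ v, (P_V v) ^ (1 / (1 + ρ)) := Finset.sum_le_sum fun v _ => hterm v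
  exact mul_nonneg (le_of_lt h1ρ) (Real.log_nonneg hsum)

theorem two_class_exponent_ge_single_class
    (X Y V : Type) [Fintype X] [Fintype Y] [Fintype V]
    (W : X → Y → ℝ) (hWnn : ∀ x y, 0 ≤ W x y) (hW1 : ∀ x, ∑ y, W x y = 1)
    (P_V : V → ℝ) (hPnn : ∀ v, 0 ≤ P_V v) (hP1 : ∑ v, P_V v = 1)
    (t : ℝ) (ht : 0 < t) :
    sSup {z : ℝ | ∃ Q₁ Q₂ : X → ℝ,
        (∀ x, 0 ≤ Q₁ x) ∧ (∑ x, Q₁ x = 1) ∧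
        (∀ x, 0 ≤ Q₂ x) ∧ (∑ x, Q₂ x = 1) ∧
        z = sSup {w : ℝ | ∃ ρ : ℝ, 1 ≤ ρ ∧
          w = concaveHull (ExPrimePair W Q₁ Q₂) ρ - t * Es P_V ρ}} ≥
      sSup {z : ℝ | ∃ Q : X → ℝ,
        (∀ x, 0 ≤ Q x) ∧ (∑ x, Q x = 1) ∧
        z = sSup {w : ℝ | ∃ ρ : ℝ, 1 ≤ ρ ∧ w = Ex W Q ρ - t * Es P_V ρ}} := by
  set C : ℝ := ∑ x : X, ∑ xb : X, |dB W x xb| with hC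
  -- ExPrimePair is bounded by C on [1,∞) for any pair of distributions
  have hpair_le : ∀ (Q₁ Q₂ : X → ℝ), (∀ x, 0 ≤ Q₁ x) → (∑ x, Q₁ x = 1) →
      (∀ x, 0 ≤ Q₂ x) → (∑ x, Q₂ x = 1) → ∀ ρ : ℝ, 1 ≤ ρ →
      ExPrimePair W Q₁ Q₂ ρ ≤ C := by
    intro Q₁ Q₂ h1 h1s h2 h2s ρ hρ
    have hρ0 : (0:ℝ) < ρ := lt_of_lt_of_le one_pos hρ
    have b11 := term_le_C W Q₁ Q₁ h1 h1s h1 h1s ρ hρ0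
    have b22 := term_le_C W Q₂ Q₂ h2 h2s h2 h2s ρ hρ0
    unfold ExPrimePair ExPrimeQ
    apply max_le
    · exact (min_le_left _ _).trans b11
    · exact (min_le_right _ _).trans b22
  -- concaveHull of a function bounded by C is bounded by C, and ≥ the function
  have hull_le : ∀ (F : ℝ → ℝ), (∀ ρ : ℝ, 1 ≤ ρ → F ρ ≤ C) → ∀ ρ : ℝ, 1 ≤ ρ →
      concaveHull F ρ ≤ C := by
    intro F hF ρ hρ
    apply Real.sSup_le
    · rintro z ⟨ρ₁, ρ₂, lam, hρ₁, hρ₂, hlam0, hlam1, _, hz⟩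
      rw [hz]
      calc lam * F ρ₁ + (1 - lam) * F ρ₂ ≤ lam * C + (1 - lam) * C := by
            apply add_le_add
            · exact mul_le_mul_of_nonneg_left (hF ρ₁ hρ₁) hlam0
            · exact mul_le_mul_of_nonneg_left (hF ρ₂ hρ₂) (by linarith)
        _ = C := by ring
    · -- 0 ≤ C
      apply Finset.sum_nonneg; intro x _
      apply Finset.sum_nonneg; intro xb _
      exact abs_nonneg _
  have hCnn : (0:ℝ) ≤ C := by
    apply Finset.sum_nonneg; intro x _
    apply Finset.sum_nonneg; intro xb _
    exact abs_nonneg _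
  have hull_ge : ∀ (F : ℝ → ℝ), (∀ ρ' : ℝ, 1 ≤ ρ' → F ρ' ≤ C) → ∀ ρ : ℝ, 1 ≤ ρ →
      F ρ ≤ concaveHull F ρ := by
    intro F hF ρ hρ
    have hmem : F ρ ∈ {z : ℝ | ∃ ρ₁ ρ₂ lam : ℝ, 1 ≤ ρ₁ ∧ 1 ≤ ρ₂ ∧ 0 ≤ lam ∧ lam ≤ 1 ∧
        lam * ρ₁ + (1 - lam) * ρ₂ = ρ ∧ F ρ = lam * F ρ₁ + (1 - lam) * F ρ₂} :=
      ⟨ρ, ρ, 1, hρ, hρ, zero_le_one, le_refl 1, by ring, by ring⟩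
    apply le_csSup
    · refine ⟨C, ?_⟩
      rintro z ⟨ρ₁, ρ₂, lam, hρ₁, hρ₂, hlam0, hlam1, _, hz⟩
      rw [hz]
      calc lam * F ρ₁ + (1 - lam) * F ρ₂ ≤ lam * C + (1 - lam) * C := by
            apply add_le_add
            · exact mul_le_mul_of_nonneg_left (hF ρ₁ hρ₁) hlam0
            · exact mul_le_mul_of_nonneg_left (hF ρ₂ hρ₂) (by linarith)
        _ = C := by ring
    · exact hmem
  -- If the RHS set is empty we are done; otherwise X carries a distribution
  rcases Set.eq_empty_or_nonempty {z : ℝ | ∃ Q : X → ℝ,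
      (∀ x, 0 ≤ Q x) ∧ (∑ x, Q x = 1) ∧
      z = sSup {w : ℝ | ∃ ρ : ℝ, 1 ≤ ρ ∧ w = Ex W Q ρ - t * Es P_V ρ}} with hB | hB
  · rw [hB, Real.sSup_empty]
    apply Real.sSup_nonneg
    rintro z ⟨Q₁, Q₂, h1, h1s, h2, h2s, hz⟩
    rw [hz]
    apply Real.sSup_nonneg
    rintro w ⟨ρ, hρ, hw⟩
    exfalso
    -- from a distribution on X we get an element of the RHS set, contradiction
    apply Set.eq_empty_iff_forall_notMem.1 hB
      (sSup {w : ℝ | ∃ ρ : ℝ, 1 ≤ ρ ∧ w = Ex W Q₁ ρ - t * Es P_V ρ})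
    exact ⟨Q₁, h1, h1s, rfl⟩
  · -- both sets nonempty; bound A above and compare pointwise
    apply csSup_le hB
    rintro z ⟨Q, hQ, hQ1, hz⟩
    -- the pair (Q,Q) gives an element of the LHS set
    have hEx_eq : ExPrimePair W Q Q = Ex W Q := by
      funext ρ
      simp [ExPrimePair, ExPrimeQ, Ex]
    have hF_le : ∀ ρ : ℝ, 1 ≤ ρ → Ex W Q ρ ≤ C := by
      intro ρ hρ
      exact term_le_C W Q Q hQ hQ1 hQ hQ1 ρ (lt_of_lt_of_le one_pos hρ)
    -- inner sets
    set S₁ : Set ℝ := {w : ℝ | ∃ ρ : ℝ, 1 ≤ ρ ∧ w = Ex W Q ρ - t * Es P_V ρ} with hS₁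
    set S₂ : Set ℝ := {w : ℝ | ∃ ρ : ℝ, 1 ≤ ρ ∧
        w = concaveHull (ExPrimePair W Q Q) ρ - t * Es P_V ρ} with hS₂
    have hS₂mem : sSup S₂ ∈ {z : ℝ | ∃ Q₁ Q₂ : X → ℝ,
        (∀ x, 0 ≤ Q₁ x) ∧ (∑ x, Q₁ x = 1) ∧
        (∀ x, 0 ≤ Q₂ x) ∧ (∑ x, Q₂ x = 1) ∧
        z = sSup {w : ℝ | ∃ ρ : ℝ, 1 ≤ ρ ∧
          w = concaveHull (ExPrimePair W Q₁ Q₂) ρ - t * Es P_V ρ}} := by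
      exact ⟨Q, Q, hQ, hQ1, hQ, hQ1, rfl⟩
    have hS₂bdd : BddAbove S₂ := by
      refine ⟨C, ?_⟩
      rintro w ⟨ρ, hρ, hw⟩
      rw [hw, hEx_eq]
      have h1 := hull_le (Ex W Q) hF_le ρ hρ
      have h2 := Es_nonneg P_V hPnn hP1 ρ hρ
      nlinarith
    have hcomp : z ≤ sSup S₂ := by
      rw [hz]
      rcases Set.eq_empty_or_nonempty S₁ with h1e | h1ne
      · rw [h1e, Real.sSup_empty]
        apply Real.sSup_nonneg
        rintro w ⟨ρ, hρ, hw⟩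
        exfalso
        exact Set.eq_empty_iff_forall_notMem.1 h1e (Ex W Q 1 - t * Es P_V 1)
          ⟨1, le_refl 1, rfl⟩
      · apply csSup_le h1ne
        rintro w ⟨ρ, hρ, hw⟩
        rw [hw]
        have hle : Ex W Q ρ - t * Es P_V ρ ≤
            concaveHull (ExPrimePair W Q Q) ρ - t * Es P_V ρ := by
          rw [hEx_eq]
          have := hull_ge (Ex W Q) hF_le ρ hρ
          linarith
        exact hle.trans (le_csSup hS₂bdd ⟨ρ, hρ, rfl⟩)
    -- A is bounded above by C
    have hAbdd : BddAbove {z : ℝ | ∃ Q₁ Q₂ : X → ℝ,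
        (∀ x, 0 ≤ Q₁ x) ∧ (∑ x, Q₁ x = 1) ∧
        (∀ x, 0 ≤ Q₂ x) ∧ (∑ x, Q₂ x = 1) ∧
        z = sSup {w : ℝ | ∃ ρ : ℝ, 1 ≤ ρ ∧
          w = concaveHull (ExPrimePair W Q₁ Q₂) ρ - t * Es P_V ρ}} := by
      refine ⟨C, ?_⟩
      rintro a ⟨Q₁, Q₂, h1, h1s, h2, h2s, ha⟩
      rw [ha]
      apply Real.sSup_le
      · rintro w ⟨ρ, hρ, hw⟩
        rw [hw]
        have hFle : ∀ ρ' : ℝ, 1 ≤ ρ' → ExPrimePair W Q₁ Q₂ ρ' ≤ C :=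
          fun ρ' hρ' => hpair_le Q₁ Q₂ h1 h1s h2 h2s ρ' hρ'
        have hle := hull_le (ExPrimePair W Q₁ Q₂) hFle ρ hρ
        have hEs := Es_nonneg P_V hPnn hP1 ρ hρ
        nlinarith
      · exact hCnn
    exact hcomp.trans (le_csSup hAbdd hS₂mem)
end
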